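/- Let X be a compact Hausdorff space, φ : X → X a continuous surjection, and L : C(X) → C(X) a transfer operator of finite type for the endomorphism α_φ(a) = a ∘ φ. Then L is faithful (L(a*·a) = 0 implies a = 0), φ is a surjective local homeomorphism, and φ is the unique continuous map inducing an endomorphism for which L is a transfer operator: if ψ : X → X is continuous and L is also a transfer operator for the endomorphism a ↦ a ∘ ψ, then ψ = φ. -/

import Mathlib

open scoped ComplexOrder

/-- `L` is a (unital, positive) transfer operator for the endomorphism
`a ↦ a ∘ φ` of `C(X, ℂ)`. -/
def IsTransferOpC {X : Type*} [TopologicalSpace X] (φ : C(X, X))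
    (L : C(X, ℂ) →ₗ[ℂ] C(X, ℂ)) : Prop :=
  L 1 = 1 ∧ (∀ f : C(X, ℂ), (∀ x, 0 ≤ f x) → ∀ x, 0 ≤ (L f) x) ∧
    ∀ f g : C(X, ℂ), L (f.comp φ * g) = f * L g

/-!
Evaluating the quasi-basis expansion `a = ∑ᵢ uᵢ · L (uᵢ* a) ∘ φ` on a fibre `φ⁻¹{x}` shows that
the restrictions of all functions to the fibre lie in the span of the restrictions of the `uᵢ`,
so fibres are finite. Since `L` is positive, hence continuous, and `L (k ∘ φ · g) x = k x · L g x`,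
the functional `f ↦ L f x` only sees `f` on `φ⁻¹{x}`. For a bump `δ` equal to `1` at `p` and
vanishing on the rest of its fibre this gives `L (f δ) (φ p) = f p · L δ (φ p)`, and then the
expansion gives `δ a = (∑ᵢ uᵢ a · conj (uᵢ p)) · L δ (φ p)` for `a` in the fibre of `p`.
Thus the weight `L δ (φ p)` never vanishes, which yields faithfulness, openness of `φ` and
uniqueness of `φ`, and the kernel `∑ᵢ uᵢ a · conj (uᵢ b)` is nonzero on the fibred product
exactly along the diagonal, so the diagonal is open and `φ` is locally injective.
-/

theorem IsOpenMap.isLocalHomeomorph_of_isLocallyInjective {X Y : Type*} [TopologicalSpace X]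
    [TopologicalSpace Y] {f : X → Y} (ho : IsOpenMap f) (hc : Continuous f)
    (hi : IsLocallyInjective f) : IsLocalHomeomorph f := by
  rw [isLocalHomeomorph_iff_isOpenEmbedding_restrict]
  intro x
  obtain ⟨U, hU, hxU, hinj⟩ := hi x
  exact ⟨U, hU.mem_nhds hxU, .of_continuous_injective_isOpenMap (hc.comp continuous_subtype_val)
    (Set.injOn_iff_injective.mp hinj) (ho.domRestrict hU)⟩

theorem exists_peak_function {X : Type*} [TopologicalSpace X] [CompletelyRegularSpace X] {s : Set X}
    (hs : IsClosed s) {p : X} (hp : p ∉ s) :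
    ∃ δ : C(X, ℂ), δ p = 1 ∧ Set.EqOn δ 0 s ∧ ∀ y, 0 ≤ δ y ∧ δ y ≤ 1 := by
  obtain ⟨f, hf, hfp, hfs⟩ := CompletelyRegularSpace.completely_regular p s hs hp
  refine ⟨⟨fun y => ((1 - f y : ℝ) : ℂ), by fun_prop⟩, by simp [hfp], fun y hy => by simp [hfs hy],
    fun y => ⟨?_, ?_⟩⟩
  · exact Complex.zero_le_real.mpr (sub_nonneg.mpr (unitInterval.le_one (f y)))
  · rw [← Complex.ofReal_one]
    exact Complex.real_le_real.mpr (sub_le_self 1 (unitInterval.nonneg (f y)))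

section

variable {X : Type*} [TopologicalSpace X]

def IsQuasiBasis {ι : Type*} [Fintype ι] (φ : C(X, X)) (L : C(X, ℂ) →ₗ[ℂ] C(X, ℂ))
    (u : ι → C(X, ℂ)) : Prop :=
  ∀ a : C(X, ℂ), a = ∑ i, u i * (L (star (u i) * a)).comp φ

noncomputable def quasiBasisKernel {ι : Type*} [Fintype ι] (u : ι → C(X, ℂ)) (a b : X) : ℂ :=
  ∑ i, u i a * star (u i b)

variable {ι : Type*} [Fintype ι] {φ : C(X, X)} {L : C(X, ℂ) →ₗ[ℂ] C(X, ℂ)} {u : ι → C(X, ℂ)}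

theorem IsQuasiBasis.card_le [T35Space X] (hu : IsQuasiBasis φ L u) {x : X} {T : Finset X}
    (hT : ↑T ⊆ φ ⁻¹' {x}) : T.card ≤ Fintype.card ι := by
  let R : C(X, ℂ) →ₗ[ℂ] (T → ℂ) :=
    { toFun f t := f t
      map_add' _ _ := rfl
      map_smul' _ _ := rfl }
  have hspan : LinearMap.range R ≤ Submodule.span ℂ (Set.range (R ∘ u)) := by
    rintro _ ⟨f, rfl⟩
    have hRf : R f = ∑ i, L (star (u i) * f) x • R (u i) := by
      ext t
      have ht : φ t = x := hT t.2
      conv_lhs => rw [hu f]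
      simp [R, ht, mul_comm]
    rw [hRf]
    exact Submodule.sum_mem _ fun i _ => Submodule.smul_mem _ _ (Submodule.subset_span ⟨i, rfl⟩)
  have htop : LinearMap.range R = ⊤ := by
    classical
    rw [eq_top_iff, ← (Pi.basisFun ℂ T).span_eq, Submodule.span_le]
    rintro _ ⟨t, rfl⟩
    obtain ⟨δ, hδt, hδ0, -⟩ := exists_peak_function (T.erase t).finite_toSet.isClosed
      (p := (t : X)) (by simp)
    refine ⟨δ, funext fun t' => ?_⟩
    by_cases h : t' = t
    · subst h; simp [R, hδt]
    · simp [R, h, hδ0 (show (t' : X) ∈ (T.erase t : Set X) by simp [h])]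
  calc T.card = Module.finrank ℂ (T → ℂ) := by simp
    _ = Module.finrank ℂ (LinearMap.range R) := by rw [htop, finrank_top]
    _ ≤ Module.finrank ℂ (Submodule.span ℂ (Set.range (R ∘ u))) := Submodule.finrank_mono hspan
    _ ≤ Fintype.card ι := finrank_range_le_card _

theorem IsQuasiBasis.finite_fiber [T35Space X] (hu : IsQuasiBasis φ L u) (x : X) :
    (φ ⁻¹' {x}).Finite := by
  by_contra h
  obtain ⟨T, hT, hcard⟩ := Set.Infinite.exists_subset_card_eq h (Fintype.card ι + 1)
  have := hu.card_le hT
  omega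

theorem IsQuasiBasis.exists_peak_fiber [T35Space X] (hu : IsQuasiBasis φ L u) {p : X}
    {V : Set X} (hV : IsOpen V) (hpV : p ∈ V) :
    ∃ δ : C(X, ℂ), δ p = 1 ∧ Set.EqOn δ 0 (φ ⁻¹' {φ p} \ {p}) ∧ Set.EqOn δ 0 Vᶜ ∧
      ∀ y, 0 ≤ δ y ∧ δ y ≤ 1 := by
  obtain ⟨δ, hδp, hδ0, hδ⟩ := exists_peak_function
    (((hu.finite_fiber (φ p)).subset (Set.sdiff_subset (t := {p}))).isClosed.union
      hV.isClosed_compl) (p := p) (by simp [hpV])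
  exact ⟨δ, hδp, hδ0.mono Set.subset_union_left, hδ0.mono Set.subset_union_right, hδ⟩

namespace IsTransferOpC

theorem continuous [CompactSpace X] (hL : IsTransferOpC φ L) : Continuous L :=
  map_continuous (PositiveLinearMap.mk₀ L fun f hf => hL.2.1 f hf)

theorem apply_eq_zero_of_le (hL : IsTransferOpC φ L) {f g : C(X, ℂ)} {x : X}
    (hg : ∀ y, 0 ≤ g y) (hgf : ∀ y, g y ≤ f y) (hf : L f x = 0) : L g x = 0 := by
  have h := hL.2.1 (f - g) (fun y => sub_nonneg.mpr (hgf y)) x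
  rw [map_sub, ContinuousMap.sub_apply, hf, zero_sub, neg_nonneg] at h
  exact le_antisymm h (hL.2.1 g hg x)

theorem apply_eq_of_eqOn_fiber [CompactSpace X] [T2Space X] (hL : IsTransferOpC φ L) {x : X}
    {f g : C(X, ℂ)} (h : Set.EqOn f g (φ ⁻¹' {x})) : L f x = L g x := by
  let I : Ideal C(X, ℂ) :=
    { carrier := {f | ∀ g, L (g * f) x = 0}
      add_mem' := fun ha hb g => by simp [mul_add, ha g, hb g]
      zero_mem' := fun g => by simp
      smul_mem' := fun c f hf g => by simpa [mul_assoc] using hf (g * c) }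
  have hI : IsClosed (I : Set C(X, ℂ)) := by
    change IsClosed {f : C(X, ℂ) | ∀ g, L (g * f) x = 0}
    simp only [Set.ofPred_forall]
    exact isClosed_iInter fun g => isClosed_eq
      ((continuous_eval_const x).comp (hL.continuous.comp (continuous_const_mul g)))
      continuous_const
  have hfiber : (φ ⁻¹' {x})ᶜ ⊆ ContinuousMap.setOfIdeal I := by
    intro y hy
    obtain ⟨k, hky, hkx, -⟩ := exists_peak_function (isClosed_singleton (x := x)) (p := φ y) hy
    refine ContinuousMap.mem_setOfIdeal.mpr ⟨k.comp φ, fun g => ?_, by simp [hky]⟩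
    rw [mul_comm, hL.2.2]
    simp [hkx rfl]
  -- A closed ideal contains every function vanishing on its zero set.
  have hfg : f - g ∈ I := by
    rw [← ContinuousMap.idealOfSet_ofIdeal_isClosed hI, ContinuousMap.mem_idealOfSet]
    intro y hy
    by_contra hne
    exact hy (hfiber fun hyx => hne (sub_eq_zero.mpr (h hyx)))
  simpa [sub_eq_zero] using hfg 1

variable [CompactSpace X] [T2Space X]

theorem apply_mul_of_peak (hL : IsTransferOpC φ L) {p : X} {δ : C(X, ℂ)} (hδp : δ p = 1)
    (hδ : Set.EqOn δ 0 (φ ⁻¹' {φ p} \ {p})) (f : C(X, ℂ)) :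
    L (f * δ) (φ p) = f p * L δ (φ p) := by
  rw [hL.apply_eq_of_eqOn_fiber (g := f p • δ), map_smul, ContinuousMap.smul_apply, smul_eq_mul]
  intro y hy
  by_cases hyp : y = p
  · simp [hyp, hδp]
  · simp [hδ ⟨hy, hyp⟩]

theorem peak_apply_eq (hL : IsTransferOpC φ L) (hu : IsQuasiBasis φ L u) {p : X} {δ : C(X, ℂ)}
    (hδp : δ p = 1) (hδ : Set.EqOn δ 0 (φ ⁻¹' {φ p} \ {p})) {a : X} (ha : φ a = φ p) :
    δ a = quasiBasisKernel u a p * L δ (φ p) := by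
  conv_lhs => rw [hu δ]
  simp [quasiBasisKernel, ha, hL.apply_mul_of_peak hδp hδ, Finset.sum_mul, mul_assoc]

theorem apply_peak_ne_zero (hL : IsTransferOpC φ L) (hu : IsQuasiBasis φ L u) {p : X}
    {δ : C(X, ℂ)} (hδp : δ p = 1) (hδ : Set.EqOn δ 0 (φ ⁻¹' {φ p} \ {p})) :
    L δ (φ p) ≠ 0 :=
  right_ne_zero_of_mul_eq_one (hδp ▸ hL.peak_apply_eq hu hδp hδ rfl).symm

theorem quasiBasisKernel_ne_zero_iff (hL : IsTransferOpC φ L) (hu : IsQuasiBasis φ L u)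
    {a b : X} (hab : φ a = φ b) : quasiBasisKernel u a b ≠ 0 ↔ a = b := by
  obtain ⟨δ, hδb, hδ, -⟩ := hu.exists_peak_fiber isOpen_univ (Set.mem_univ b)
  have hw := hL.apply_peak_ne_zero hu hδb hδ
  have hδa := hL.peak_apply_eq hu hδb hδ hab
  constructor
  · intro hk
    by_contra hne
    rw [hδ ⟨hab, hne⟩] at hδa
    exact mul_ne_zero hk hw hδa.symm
  · rintro rfl hk
    rw [hδb, hk, zero_mul] at hδa
    exact one_ne_zero hδa

theorem eq_zero_of_apply_star_mul_self_eq_zero (hL : IsTransferOpC φ L)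
    (hu : IsQuasiBasis φ L u) {a : C(X, ℂ)} (ha : L (star a * a) = 0) : a = 0 := by
  ext p
  obtain ⟨δ, hδp, hδ, -, hδ01⟩ := hu.exists_peak_fiber isOpen_univ (Set.mem_univ p)
  have hzero : L (star a * a * δ) (φ p) = 0 := by
    refine hL.apply_eq_zero_of_le (f := star a * a) (fun y => ?_) (fun y => ?_) (by simp [ha])
    · exact mul_nonneg (star_mul_self_nonneg (a y)) (hδ01 y).1
    · simpa using mul_le_mul_of_nonneg_left (hδ01 y).2 (star_mul_self_nonneg (a y))
  rw [hL.apply_mul_of_peak hδp hδ] at hzero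
  simpa using (mul_eq_zero.mp hzero).resolve_right (hL.apply_peak_ne_zero hu hδp hδ)

theorem isOpenMap (hL : IsTransferOpC φ L) (hu : IsQuasiBasis φ L u) : IsOpenMap φ := by
  intro V hV
  rw [isOpen_iff_forall_mem_open]
  rintro _ ⟨p, hpV, rfl⟩
  obtain ⟨δ, hδp, hδ, hδV, -⟩ := hu.exists_peak_fiber hV hpV
  refine ⟨{x | L δ x ≠ 0}, fun x hx => ?_, isOpen_ne_fun (L δ).continuous continuous_const,
    hL.apply_peak_ne_zero hu hδp hδ⟩
  by_contra hxV
  refine hx ((hL.apply_eq_of_eqOn_fiber (g := 0) fun y hy => hδV fun hyV => ?_).trans (by simp))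
  exact hxV ⟨y, hyV, hy⟩

theorem isLocallyInjective (hL : IsTransferOpC φ L) (hu : IsQuasiBasis φ L u) :
    IsLocallyInjective φ := by
  rw [isLocallyInjective_iff_isOpen_diagonal]
  have hdiag : Function.pullbackDiagonal φ =
      (fun q : Function.Pullback φ φ => quasiBasisKernel u q.1.1 q.1.2) ⁻¹' {0}ᶜ := by
    ext ⟨⟨a, b⟩, hab⟩
    exact (hL.quasiBasisKernel_ne_zero_iff hu hab).symm
  rw [hdiag]
  refine isOpen_compl_singleton.preimage ?_
  unfold quasiBasisKernel
  fun_prop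

theorem eq_of_isTransferOpC (hL : IsTransferOpC φ L) (hu : IsQuasiBasis φ L u) {ψ : C(X, X)}
    (hψ : IsTransferOpC ψ L) : ψ = φ := by
  ext p
  by_contra hne
  obtain ⟨k, hkψ, hkφ, -⟩ := exists_peak_function (isClosed_singleton (x := φ p)) hne
  obtain ⟨δ, hδp, hδ, -⟩ := hu.exists_peak_fiber isOpen_univ (Set.mem_univ p)
  have h := hL.apply_mul_of_peak hδp hδ (k.comp ψ)
  rw [hψ.2.2, ContinuousMap.mul_apply, ContinuousMap.comp_apply, hkψ, hkφ rfl] at h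
  exact hL.apply_peak_ne_zero hu hδp hδ (by simpa using h.symm)

end IsTransferOpC

end

theorem stmt6_general {X : Type*} [TopologicalSpace X] [CompactSpace X] [T2Space X]
    (φ : C(X, X))
    (L : C(X, ℂ) →ₗ[ℂ] C(X, ℂ)) (hL : IsTransferOpC φ L)
    (hfin : ∃ (N : ℕ) (u : Fin N → C(X, ℂ)),
        ∀ a : C(X, ℂ), a = ∑ i, u i * ((L (star (u i) * a)).comp φ)) :
    (∀ a : C(X, ℂ), L (star a * a) = 0 → a = 0) ∧
    IsLocalHomeomorph (⇑φ) ∧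
    (∀ ψ : C(X, X), IsTransferOpC ψ L → ψ = φ) := by
  obtain ⟨N, u, hu⟩ := hfin
  exact ⟨fun a => hL.eq_zero_of_apply_star_mul_self_eq_zero hu,
    (hL.isOpenMap hu).isLocalHomeomorph_of_isLocallyInjective φ.continuous
      (hL.isLocallyInjective hu),
    fun ψ => hL.eq_of_isTransferOpC hu⟩

/-- a transfer operator of finite type for `α_φ` is faithful, `φ` is a
(surjective) local homeomorphism, and `φ` is the unique continuous map inducing an
endomorphism for which `L` is a transfer operator. -/
theorem stmt6 {X : Type*} [TopologicalSpace X] [CompactSpace X] [T2Space X]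
    (φ : C(X, X)) (hsurj : Function.Surjective φ)
    (L : C(X, ℂ) →ₗ[ℂ] C(X, ℂ)) (hL : IsTransferOpC φ L)
    (hfin : ∃ (N : ℕ) (u : Fin N → C(X, ℂ)),
        ∀ a : C(X, ℂ), a = ∑ i, u i * ((L (star (u i) * a)).comp φ)) :
    (∀ a : C(X, ℂ), L (star a * a) = 0 → a = 0) ∧
    IsLocalHomeomorph (⇑φ) ∧
    (∀ ψ : C(X, X), IsTransferOpC ψ L → ψ = φ) :=
  stmt6_general φ L hL hfin
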